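/- Let λ ≠ 0 be a real number. Every complex root z of the quadratic factor q_λ satisfies |z| < 1 if and only if λ < −1 or λ > 1/3. (This characterizes the zero-stability region of ZeroSNet.) -/

import Mathlib

/-- The quadratic factor of the ZeroSNet characteristic polynomial over ℂ (real parameter λ):
`q_λ(ρ) = ρ² + ((λ−3)/(4λ))ρ + (1+λ)/(4λ)`. -/
noncomputable def zerosQuadFactor (l : ℝ) (ρ : ℂ) : ℂ :=
  ρ ^ 2 + (((l : ℂ) - 3) / (4 * (l : ℂ))) * ρ + (1 + (l : ℂ)) / (4 * (l : ℂ))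

/-!
The roots of a real monic quadratic `z² + b z + c` lie in the open unit disc iff `c < 1` and
`|b| < 1 + c` (the Schur–Cohn–Jury conditions). A non-real root `z` comes with its conjugate, so
`|z|² = c`; real roots `r₁, r₂` satisfy `c = r₁ r₂` and `1 + c ± b = (1 ± r₁)(1 ± r₂)`. For `q_λ` the
three conditions read `(1 + λ)/(4λ) < 1`, `(3λ - 1)/λ > 0` and `(λ + 1)/λ > 0`.
-/

lemma abs_lt_one_of_quadratic_root {t b c : ℝ} (ht : t ^ 2 + b * t + c = 0) (hc : c < 1)
    (hb : |b| < 1 + c) : |t| < 1 := by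
  obtain ⟨hb₁, hb₂⟩ := abs_lt.mp hb
  have h₁ : 1 + b + c = (1 - t) * (1 + t + b) := by linear_combination ht
  have h₂ : 1 - b + c = (1 + t) * (1 - t - b) := by linear_combination ht
  refine abs_lt.mpr ⟨?_, ?_⟩ <;> by_contra! h
  · nlinarith
  · nlinarith

lemma Complex.normSq_eq_of_quadratic_root {z : ℂ} {b c : ℝ} (hz : z ^ 2 + b * z + c = 0)
    (him : z.im ≠ 0) : normSq z = c := by
  have hre := congrArg re hz
  have himz := congrArg im hz
  simp only [sq, add_re, add_im, mul_re, mul_im, ofReal_re, ofReal_im, zero_re, zero_im] at hre himz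
  have hb : b = -2 * z.re := by
    have : z.im * (2 * z.re + b) = 0 := by linear_combination himz
    linarith [(mul_eq_zero.mp this).resolve_left him]
  rw [normSq_apply]
  subst hb
  linear_combination -hre

lemma norm_lt_one_of_quadratic_root {z : ℂ} {b c : ℝ} (hz : z ^ 2 + b * z + c = 0) (hc : c < 1)
    (hb : |b| < 1 + c) : ‖z‖ < 1 := by
  rcases eq_or_ne z.im 0 with him | him
  · have ht : z.re ^ 2 + b * z.re + c = 0 := by
      simpa [sq, him] using congrArg Complex.re hz
    rw [← Complex.re_add_im z, him, Complex.ofReal_zero, zero_mul, add_zero,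
      Complex.norm_real, Real.norm_eq_abs]
    exact abs_lt_one_of_quadratic_root ht hc hb
  · have hsq : ‖z‖ ^ 2 < 1 := by
      rwa [← Complex.normSq_eq_norm_sq, Complex.normSq_eq_of_quadratic_root hz him]
    exact (sq_lt_one_iff₀ (norm_nonneg z)).mp hsq

lemma exists_quadratic_root_normSq_eq {b c : ℝ} (hD : b ^ 2 - 4 * c < 0) :
    ∃ z : ℂ, z ^ 2 + b * z + c = 0 ∧ Complex.normSq z = c := by
  obtain ⟨s, hs⟩ : ∃ s : ℝ, s ^ 2 = 4 * c - b ^ 2 := ⟨_, Real.sq_sqrt (by linarith)⟩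
  refine ⟨⟨-b / 2, s / 2⟩, ?_, ?_⟩
  · apply Complex.ext <;> simp only [sq, Complex.add_re, Complex.add_im, Complex.mul_re,
      Complex.mul_im, Complex.ofReal_re, Complex.ofReal_im, Complex.zero_re, Complex.zero_im]
    · linear_combination -hs / 4
    · ring
  · rw [Complex.normSq_mk]
    linear_combination hs / 4

lemma exists_vieta_of_discrim_nonneg {b c : ℝ} (hD : 0 ≤ b ^ 2 - 4 * c) :
    ∃ r₁ r₂ : ℝ, b = -(r₁ + r₂) ∧ c = r₁ * r₂ := by
  obtain ⟨s, hs⟩ : ∃ s : ℝ, s ^ 2 = b ^ 2 - 4 * c := ⟨_, Real.sq_sqrt hD⟩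
  exact ⟨(-b + s) / 2, (-b - s) / 2, by ring, by linear_combination hs / 4⟩

theorem quadratic_roots_norm_lt_one_iff (b c : ℝ) :
    (∀ z : ℂ, z ^ 2 + b * z + c = 0 → ‖z‖ < 1) ↔ c < 1 ∧ |b| < 1 + c := by
  refine ⟨fun H => ?_, fun ⟨hc, hb⟩ z hz => norm_lt_one_of_quadratic_root hz hc hb⟩
  rcases le_or_gt 0 (b ^ 2 - 4 * c) with hD | hD
  · obtain ⟨r₁, r₂, rfl, rfl⟩ := exists_vieta_of_discrim_nonneg hD
    have hroot : ∀ r : ℝ, r ^ 2 + -(r₁ + r₂) * r + r₁ * r₂ = 0 → |r| < 1 := by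
      intro r hr
      rw [← Real.norm_eq_abs, ← Complex.norm_real]
      exact H r (by exact_mod_cast hr)
    obtain ⟨h₁, h₁'⟩ := abs_lt.mp (hroot r₁ (by ring))
    obtain ⟨h₂, h₂'⟩ := abs_lt.mp (hroot r₂ (by ring))
    exact ⟨by nlinarith, abs_lt.mpr ⟨by nlinarith, by nlinarith⟩⟩
  · obtain ⟨z, hz, hnorm⟩ := exists_quadratic_root_normSq_eq hD
    have hc : c < 1 := by
      rw [← hnorm, Complex.normSq_eq_norm_sq]
      nlinarith [H z hz, norm_nonneg z]
    exact ⟨hc, abs_lt.mpr ⟨by nlinarith [sq_nonneg (b + 2)], by nlinarith [sq_nonneg (b - 2)]⟩⟩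

lemma zerosnet_coeffs_stable_iff {l : ℝ} (hl : l ≠ 0) :
    (1 + l) / (4 * l) < 1 ∧ |(l - 3) / (4 * l)| < 1 + (1 + l) / (4 * l) ↔ l < -1 ∨ 1 / 3 < l := by
  have h₀ : 1 - (1 + l) / (4 * l) = (3 * l - 1) / (4 * l) := by field_simp; ring
  have h₁ : 1 + (1 + l) / (4 * l) + (l - 3) / (4 * l) = (3 * l - 1) / (2 * l) := by
    field_simp; ring
  have h₂ : 1 + (1 + l) / (4 * l) - (l - 3) / (4 * l) = (l + 1) / l := by field_simp; ring
  rw [← sub_pos, abs_lt, neg_lt_iff_pos_add', ← sub_pos (b := (l - 3) / (4 * l)), h₀, h₁, h₂,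
    div_pos_iff, div_pos_iff, div_pos_iff]
  constructor
  · rintro ⟨⟨h, -⟩ | ⟨-, h⟩, -, ⟨-, h'⟩ | ⟨h', -⟩⟩ <;>
      first | (left; linarith) | (right; linarith)
  · rintro (h | h)
    · exact ⟨.inr ⟨by linarith, by linarith⟩, .inr ⟨by linarith, by linarith⟩,
        .inr ⟨by linarith, by linarith⟩⟩
    · exact ⟨.inl ⟨by linarith, by linarith⟩, .inl ⟨by linarith, by linarith⟩,
        .inl ⟨by linarith, by linarith⟩⟩

/-- Zero-stability region of ZeroSNet: every complex root of the quadratic factor `q_λ` has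
modulus strictly less than 1 if and only if `λ < −1` or `λ > 1/3`. -/
theorem zerosnet_stability_region (l : ℝ) (hl : l ≠ 0) :
    (∀ z : ℂ, zerosQuadFactor l z = 0 → ‖z‖ < 1) ↔ (l < -1 ∨ 1 / 3 < l) := by
  have hq : ∀ z, zerosQuadFactor l z =
      z ^ 2 + (((l - 3) / (4 * l) : ℝ) : ℂ) * z + (((1 + l) / (4 * l) : ℝ) : ℂ) := by
    intro z
    rw [zerosQuadFactor]
    push_cast
    ring
  simp only [hq]
  rw [quadratic_roots_norm_lt_one_iff, zerosnet_coeffs_stable_iff hl]
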